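/- Let X ⊂ ℝ^p and Y ⊂ ℝ^q be compact sets and fix ε > 0. Let β_h (h ∈ ℕ) and β be nonzero finite positive Radon measures on Y with β_h converging weakly to β; let g_h, g ∈ C(Y) with g_h → g uniformly on Y; and let M_h, M ∈ ℝ^{q×p} with M_h → M. Define the barycentric maps T_h(x) = [∫_Y y·exp((g_h(y) + ⟨M_h x, y⟩)/ε) dβ_h(y)] / [∫_Y exp((g_h(y) + ⟨M_h x, y⟩)/ε) dβ_h(y)] and T(x) analogously with (g, M, β). Then T_h(x) → T(x) for every x ∈ X, ‖T_h(x)‖ ≤ max_{y∈Y} ‖y‖ for all h and x, and consequently T_h → T in L²(μ; ℝ^q) for every finite positive measure μ on X. -/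

import Mathlib

/-!
Both integrands of `baryMap` are continuous functions of the triple `(g y, M x, y)`, which
converges uniformly on the compact set `Y`. Since the masses of `βs h` stay bounded, uniform
convergence of the integrands together with weak convergence of the measures gives convergence of
numerator and denominator, and the limiting denominator is positive. `baryMap` is an average of
points of `Y` with positive weights, whence the norm bound, and the `L²` convergence then follows
by dominated convergence.
-/

open MeasureTheory Filter Set
open scoped ENNReal NNReal

noncomputable section

/-- A matrix acting as a linear map between Euclidean spaces. -/
def mv {p q : ℕ} (M : Matrix (Fin q) (Fin p) ℝ) (x : EuclideanSpace ℝ (Fin p)) :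
    EuclideanSpace ℝ (Fin q) := WithLp.toLp 2 (fun i => ∑ j, M i j * x j)

/-- The entropic barycentric map
`T(x) = (∫ y e^{(g(y)+⟨Mx,y⟩)/ε} dβ(y)) / (∫ e^{(g(y)+⟨Mx,y⟩)/ε} dβ(y))`. -/
def baryMap {p q : ℕ} (ε : ℝ) (g : EuclideanSpace ℝ (Fin q) → ℝ)
    (M : Matrix (Fin q) (Fin p) ℝ) (β : Measure (EuclideanSpace ℝ (Fin q)))
    (x : EuclideanSpace ℝ (Fin p)) : EuclideanSpace ℝ (Fin q) :=
  (∫ y, Real.exp ((g y + (inner ℝ (mv M x) y : ℝ)) / ε) ∂β)⁻¹ •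
    ∫ y, Real.exp ((g y + (inner ℝ (mv M x) y : ℝ)) / ε) • y ∂β

open Topology
open scoped BoundedContinuousFunction

theorem TendstoUniformlyOn.prodMk_diag {ι α β γ : Type*} [UniformSpace β] [UniformSpace γ]
    {p : Filter ι} {s : Set α} {F : ι → α → β} {f : α → β} {G : ι → α → γ} {g : α → γ}
    (hF : TendstoUniformlyOn F f p s) (hG : TendstoUniformlyOn G g p s) :
    TendstoUniformlyOn (fun i a => (F i a, G i a)) (fun a => (f a, g a)) p s :=
  fun u hu => ((hF.prodMk hG) u hu).diag_of_prod

theorem Continuous.comp_tendstoUniformlyOn_of_isCompact {ι α β γ : Type*} [TopologicalSpace α]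
    [PseudoMetricSpace β] [ProperSpace β] [UniformSpace γ] {p : Filter ι} {s : Set α}
    (hs : IsCompact s) {F : ι → α → β} {f : α → β} (hf : ContinuousOn f s)
    (hF : TendstoUniformlyOn F f p s) {φ : β → γ} (hφ : Continuous φ) :
    TendstoUniformlyOn (fun i a => φ (F i a)) (fun a => φ (f a)) p s := by
  have hK := (hs.image_of_continuousOn hf).cthickening (r := 1)
  refine (hK.uniformContinuousOn_of_continuous hφ.continuousOn).comp_tendstoUniformlyOn_eventually
    ?_ (fun a ha => Metric.self_subset_cthickening _ (mem_image_of_mem f ha)) hF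
  filter_upwards [Metric.tendstoUniformlyOn_iff.1 hF 1 one_pos] with i hi a ha
  exact Metric.mem_cthickening_of_dist_le _ (f a) _ _ (mem_image_of_mem f ha)
    (dist_comm (f a) _ ▸ (hi a ha).le)

section WeakConvergence

variable {E ι : Type*} [TopologicalSpace E] [MeasurableSpace E] {Y : Set E} {l : Filter ι}
  {βs : ι → Measure E} {β : Measure E}

theorem tendsto_integral_of_continuous (hY : IsCompact Y) (hβs : ∀ i, βs i Yᶜ = 0)
    (hβ : β Yᶜ = 0)
    (hweak : ∀ f : E →ᵇ ℝ, Tendsto (fun i => ∫ y, f y ∂βs i) l (𝓝 (∫ y, f y ∂β)))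
    {f : E → ℝ} (hf : Continuous f) :
    Tendsto (fun i => ∫ y, f y ∂βs i) l (𝓝 (∫ y, f y ∂β)) := by
  obtain ⟨C, hC⟩ := hY.exists_bound_of_continuousOn hf.continuousOn
  let F : E →ᵇ ℝ := .ofNormedAddCommGroup (fun y => max (-|C|) (min (f y) |C|)) (by fun_prop)
    |C| fun y => by
      rw [Real.norm_eq_abs, abs_le]
      exact ⟨le_max_left _ _, max_le (by linarith [abs_nonneg C]) (min_le_right _ _)⟩
  have hFf : ∀ y ∈ Y, F y = f y := fun y hy => by
    have := abs_le.1 ((hC y hy).trans (le_abs_self C))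
    show max (-|C|) (min (f y) |C|) = f y
    rw [min_eq_left this.2, max_eq_right this.1]
  have hF : ∀ κ : Measure E, κ Yᶜ = 0 → ∫ y, F y ∂κ = ∫ y, f y ∂κ := fun κ hκ =>
    integral_congr_ae <| by filter_upwards [mem_ae_iff.2 hκ] with y hy using hFf y hy
  simpa only [hF _ (hβs _), hF _ hβ] using hweak F

variable [T2Space E] [OpensMeasurableSpace E]

theorem Continuous.integrable_of_measure_compl_eq_zero {V : Type*} [NormedAddCommGroup V]
    {κ : Measure E} [IsFiniteMeasure κ] (hY : IsCompact Y) (hκ : κ Yᶜ = 0) {f : E → V}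
    (hf : Continuous f) : Integrable f κ := by
  rw [← Measure.restrict_eq_self_of_ae_mem (mem_ae_iff.2 hκ)]
  exact hf.continuousOn.integrableOn_compact hY

variable [∀ i, IsFiniteMeasure (βs i)]

theorem tendsto_integral_of_tendstoUniformlyOn {V : Type*} [NormedAddCommGroup V]
    [NormedSpace ℝ V] (hY : IsCompact Y) (hβs : ∀ i, βs i Yᶜ = 0)
    (hweak : ∀ f : E →ᵇ ℝ, Tendsto (fun i => ∫ y, f y ∂βs i) l (𝓝 (∫ y, f y ∂β)))
    {Fs : ι → E → V} {F : E → V} (hFs : ∀ i, Continuous (Fs i)) (hF : Continuous F)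
    (hFsF : TendstoUniformlyOn Fs F l Y)
    (hlim : Tendsto (fun i => ∫ y, F y ∂βs i) l (𝓝 (∫ y, F y ∂β))) :
    Tendsto (fun i => ∫ y, Fs i y ∂βs i) l (𝓝 (∫ y, F y ∂β)) := by
  have hmass : Tendsto (fun i => (βs i).real univ) l (𝓝 (β.real univ)) := by
    simpa using hweak 1
  set K := β.real univ + 1
  have hK : 0 < K := by positivity
  have herr : Tendsto (fun i => ∫ y, Fs i y - F y ∂βs i) l (𝓝 0) := by
    refine Metric.tendsto_nhds.2 fun δ hδ => ?_
    filter_upwards [Metric.tendstoUniformlyOn_iff.1 hFsF (δ / (2 * K)) (by positivity),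
      hmass.eventually_le_const (lt_add_one _)] with i hclose hmass_le
    have hbound : ∀ᵐ y ∂βs i, ‖Fs i y - F y‖ ≤ δ / (2 * K) := by
      filter_upwards [mem_ae_iff.2 (hβs i)] with y hy
      rw [← dist_eq_norm, dist_comm]
      exact (hclose y hy).le
    calc dist (∫ y, Fs i y - F y ∂βs i) 0 ≤ δ / (2 * K) * (βs i).real univ := by
          simpa using norm_integral_le_of_norm_le_const hbound
      _ ≤ δ / (2 * K) * K := by gcongr
      _ < δ := by field_simp; linarith
  have hsplit : ∀ i, ∫ y, Fs i y ∂βs i = (∫ y, Fs i y - F y ∂βs i) + ∫ y, F y ∂βs i := by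
    intro i
    rw [integral_sub ((hFs i).integrable_of_measure_compl_eq_zero hY (hβs i))
      (hF.integrable_of_measure_compl_eq_zero hY (hβs i)), sub_add_cancel]
  simpa only [hsplit, zero_add] using herr.add hlim

variable [IsFiniteMeasure β]

theorem tendsto_integral_of_continuous_euclidean {n : Type*} [Fintype n] (hY : IsCompact Y)
    (hβs : ∀ i, βs i Yᶜ = 0) (hβ : β Yᶜ = 0)
    (hweak : ∀ f : E →ᵇ ℝ, Tendsto (fun i => ∫ y, f y ∂βs i) l (𝓝 (∫ y, f y ∂β)))
    {F : E → EuclideanSpace ℝ n} (hF : Continuous F) :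
    Tendsto (fun i => ∫ y, F y ∂βs i) l (𝓝 (∫ y, F y ∂β)) := by
  have hcoord : ∀ κ : Measure E, [IsFiniteMeasure κ] → κ Yᶜ = 0 → ∀ j,
      (∫ y, F y ∂κ) j = ∫ y, F y j ∂κ := fun κ _ hκ j =>
    ((EuclideanSpace.proj j).integral_comp_comm (hF.integrable_of_measure_compl_eq_zero hY hκ)).symm
  have := (PiLp.continuous_toLp 2 _).tendsto _ |>.comp <| tendsto_pi_nhds.2 fun j =>
    tendsto_integral_of_continuous hY hβs hβ hweak ((EuclideanSpace.proj j).continuous.comp hF)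
  simpa [Function.comp_def, ← hcoord _ (hβs _), ← hcoord _ hβ] using this

end WeakConvergence

theorem norm_inv_integral_smul_integral_le {α V : Type*} [MeasurableSpace α]
    [NormedAddCommGroup V] [NormedSpace ℝ V] {μ : Measure α} {w : α → ℝ} {f : α → V} {R : ℝ}
    (hw : 0 ≤ᵐ[μ] w) (hf : ∀ᵐ a ∂μ, ‖f a‖ ≤ R) (hR : 0 ≤ R) :
    ‖(∫ a, w a ∂μ)⁻¹ • ∫ a, w a • f a ∂μ‖ ≤ R := by
  rcases eq_or_ne (∫ a, w a ∂μ) 0 with hzero | hne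
  · simpa [hzero] using hR
  have hpos : 0 < ∫ a, w a ∂μ := (integral_nonneg_of_ae hw).lt_of_ne' hne
  have hnum : ‖∫ a, w a • f a ∂μ‖ ≤ (∫ a, w a ∂μ) * R :=
    calc ‖∫ a, w a • f a ∂μ‖ ≤ ∫ a, ‖w a • f a‖ ∂μ := norm_integral_le_integral_norm _
      _ ≤ ∫ a, w a * R ∂μ := by
          refine integral_mono_of_nonneg (ae_of_all _ fun a => norm_nonneg _)
            ((Integrable.of_integral_ne_zero hne).mul_const R) ?_
          filter_upwards [hw, hf] with a hwa hfa
          rw [norm_smul, Real.norm_of_nonneg hwa]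
          exact mul_le_mul_of_nonneg_left hfa hwa
      _ = (∫ a, w a ∂μ) * R := integral_mul_const _ _
  rw [norm_smul, Real.norm_of_nonneg (inv_nonneg.2 hpos.le)]
  calc (∫ a, w a ∂μ)⁻¹ * ‖∫ a, w a • f a ∂μ‖ ≤ (∫ a, w a ∂μ)⁻¹ * ((∫ a, w a ∂μ) * R) := by
        gcongr
    _ = R := by field_simp

theorem tendsto_integral_norm_sub_sq_of_tendsto {α ι V : Type*} [MeasurableSpace α]
    [NormedAddCommGroup V] {μ : Measure α} [IsFiniteMeasure μ] {l : Filter ι}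
    [l.IsCountablyGenerated] {Fs : ι → α → V} {F : α → V} {R : ℝ}
    (hFs : ∀ i, AEStronglyMeasurable (Fs i) μ) (hF : AEStronglyMeasurable F μ)
    (hFsR : ∀ i a, ‖Fs i a‖ ≤ R) (hFR : ∀ a, ‖F a‖ ≤ R)
    (hlim : ∀ a, Tendsto (fun i => Fs i a) l (𝓝 (F a))) :
    Tendsto (fun i => ∫ a, ‖Fs i a - F a‖ ^ 2 ∂μ) l (𝓝 0) := by
  have hdom : ∀ i a, ‖‖Fs i a - F a‖ ^ 2‖ ≤ (2 * R) ^ 2 := fun i a => by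
    rw [norm_pow, norm_norm]
    exact pow_le_pow_left₀ (norm_nonneg _)
      ((norm_sub_le _ _).trans (by linarith [hFsR i a, hFR a])) 2
  simpa using tendsto_integral_filter_of_dominated_convergence (μ := μ)
    (F := fun i a => ‖Fs i a - F a‖ ^ 2) (fun _ => (2 * R) ^ 2)
    (.of_forall fun i => ((hFs i).sub hF).norm.pow 2) (.of_forall fun i => ae_of_all _ (hdom i))
    (integrable_const _) (ae_of_all _ fun a => ((hlim a).sub_const (F a)).norm.pow 2)

section BaryMap

variable {p q : ℕ}

theorem continuous_mv_uncurry :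
    Continuous fun Mx : Matrix (Fin q) (Fin p) ℝ × EuclideanSpace ℝ (Fin p) => mv Mx.1 Mx.2 := by
  unfold mv
  fun_prop

@[fun_prop]
theorem continuous_mv (M : Matrix (Fin q) (Fin p) ℝ) : Continuous (mv M) := by
  unfold mv
  fun_prop

theorem norm_baryMap_le {Y : Set (EuclideanSpace ℝ (Fin q))} (hY : Bornology.IsBounded Y)
    {κ : Measure (EuclideanSpace ℝ (Fin q))} (hκ : κ Yᶜ = 0) (ε : ℝ)
    (g : EuclideanSpace ℝ (Fin q) → ℝ) (M : Matrix (Fin q) (Fin p) ℝ)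
    (x : EuclideanSpace ℝ (Fin p)) :
    ‖baryMap ε g M κ x‖ ≤ sSup ((fun y => ‖y‖) '' Y) := by
  have hbdd : BddAbove ((fun y => ‖y‖) '' Y) := by
    obtain ⟨C, hC⟩ := hY.exists_norm_le
    exact ⟨C, forall_mem_image.2 hC⟩
  refine norm_inv_integral_smul_integral_le (ae_of_all _ fun y => (Real.exp_pos _).le) ?_
    (Real.sSup_nonneg (forall_mem_image.2 fun y _ => norm_nonneg y))
  filter_upwards [mem_ae_iff.2 hκ] with y hy
  exact le_csSup hbdd (mem_image_of_mem _ hy)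

theorem measurable_baryMap (ε : ℝ) {g : EuclideanSpace ℝ (Fin q) → ℝ} (hg : Continuous g)
    (M : Matrix (Fin q) (Fin p) ℝ) (κ : Measure (EuclideanSpace ℝ (Fin q))) [SFinite κ] :
    Measurable (baryMap ε g M κ) := by
  have hw : Continuous fun xy : EuclideanSpace ℝ (Fin p) × EuclideanSpace ℝ (Fin q) =>
      Real.exp ((g xy.2 + inner ℝ (mv M xy.1) xy.2) / ε) := by
    fun_prop
  exact (hw.stronglyMeasurable.integral_prod_right' (ν := κ)).measurable.inv.smul
    ((hw.smul continuous_snd).stronglyMeasurable.integral_prod_right').measurable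

theorem tendsto_baryMap {ι : Type*} {l : Filter ι} {Y : Set (EuclideanSpace ℝ (Fin q))}
    (hY : IsCompact Y) (ε : ℝ) {βs : ι → Measure (EuclideanSpace ℝ (Fin q))}
    {β : Measure (EuclideanSpace ℝ (Fin q))} [∀ i, IsFiniteMeasure (βs i)] [IsFiniteMeasure β]
    [NeZero β] (hβs : ∀ i, βs i Yᶜ = 0) (hβ : β Yᶜ = 0)
    (hweak : ∀ f : EuclideanSpace ℝ (Fin q) →ᵇ ℝ,
      Tendsto (fun i => ∫ y, f y ∂βs i) l (𝓝 (∫ y, f y ∂β)))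
    {gs : ι → EuclideanSpace ℝ (Fin q) → ℝ} {g : EuclideanSpace ℝ (Fin q) → ℝ}
    (hgs : ∀ i, Continuous (gs i)) (hg : Continuous g) (hgsg : TendstoUniformlyOn gs g l Y)
    {Ms : ι → Matrix (Fin q) (Fin p) ℝ} {M : Matrix (Fin q) (Fin p) ℝ}
    (hMs : Tendsto Ms l (𝓝 M)) (x : EuclideanSpace ℝ (Fin p)) :
    Tendsto (fun i => baryMap ε (gs i) (Ms i) (βs i) x) l (𝓝 (baryMap ε g M β x)) := by
  have hv : Tendsto (fun i => mv (Ms i) x) l (𝓝 (mv M x)) :=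
    (continuous_mv_uncurry.tendsto (M, x)).comp (hMs.prodMk_nhds tendsto_const_nhds)
  have hunif : TendstoUniformlyOn (fun i y => (gs i y, mv (Ms i) x, y))
      (fun y => (g y, mv M x, y)) l Y :=
    hgsg.prodMk_diag <| (hv.tendstoUniformlyOn_const Y).prodMk_diag fun _ hu =>
      .of_forall fun _ _ _ => refl_mem_uniformity hu
  have hcont : ContinuousOn (fun y => (g y, mv M x, y)) Y := by fun_prop
  let w : ℝ × EuclideanSpace ℝ (Fin q) × EuclideanSpace ℝ (Fin q) → ℝ :=
    fun z => Real.exp ((z.1 + inner ℝ z.2.1 z.2.2) / ε)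
  have hw : Continuous w := by fun_prop
  have hden := tendsto_integral_of_tendstoUniformlyOn hY hβs hweak
    (fun i => by fun_prop) (by fun_prop) (hw.comp_tendstoUniformlyOn_of_isCompact hY hcont hunif)
    (tendsto_integral_of_continuous hY hβs hβ hweak (by fun_prop))
  have hnum := tendsto_integral_of_tendstoUniformlyOn hY hβs hweak
    (fun i => by fun_prop) (by fun_prop)
    ((hw.smul continuous_snd.snd).comp_tendstoUniformlyOn_of_isCompact hY hcont hunif)
    (tendsto_integral_of_continuous_euclidean hY hβs hβ hweak (by fun_prop))
  have hpos : 0 < ∫ y, w (g y, mv M x, y) ∂β :=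
    integral_exp_pos ((hw.comp (by fun_prop)).integrable_of_measure_compl_eq_zero hY hβ)
  exact (hden.inv₀ hpos.ne').smul hnum

end BaryMap

theorem stmt14_general {p q : ℕ}
    (X : Set (EuclideanSpace ℝ (Fin p))) (Y : Set (EuclideanSpace ℝ (Fin q)))
    (hY : IsCompact Y)
    (ε : ℝ)
    (βs : ℕ → Measure (EuclideanSpace ℝ (Fin q)))
    (β : Measure (EuclideanSpace ℝ (Fin q)))
    (hβsfin : ∀ h, IsFiniteMeasure (βs h)) [IsFiniteMeasure β]
    (hβne : β ≠ 0)
    (hβssupp : ∀ h, βs h Yᶜ = 0) (hβsupp : β Yᶜ = 0)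
    (hweak : ∀ f : BoundedContinuousFunction (EuclideanSpace ℝ (Fin q)) ℝ,
      Filter.Tendsto (fun h => ∫ y, f y ∂(βs h)) Filter.atTop (nhds (∫ y, f y ∂β)))
    (gs : ℕ → EuclideanSpace ℝ (Fin q) → ℝ) (g : EuclideanSpace ℝ (Fin q) → ℝ)
    (hgs_cont : ∀ h, Continuous (gs h)) (hg_cont : Continuous g)
    (hg_unif : TendstoUniformlyOn gs g Filter.atTop Y)
    (Ms : ℕ → Matrix (Fin q) (Fin p) ℝ) (M : Matrix (Fin q) (Fin p) ℝ)
    (hM : ∀ i j, Filter.Tendsto (fun h => Ms h i j) Filter.atTop (nhds (M i j))) :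
    (∀ x ∈ X, Filter.Tendsto (fun h => baryMap ε (gs h) (Ms h) (βs h) x) Filter.atTop
        (nhds (baryMap ε g M β x))) ∧
    (∀ (h : ℕ) (x : EuclideanSpace ℝ (Fin p)),
      ‖baryMap ε (gs h) (Ms h) (βs h) x‖ ≤ sSup ((fun y => ‖y‖) '' Y)) ∧
    (∀ μ : Measure (EuclideanSpace ℝ (Fin p)), IsFiniteMeasure μ → μ Xᶜ = 0 →
      Filter.Tendsto
        (fun h => ∫ x, ‖baryMap ε (gs h) (Ms h) (βs h) x - baryMap ε g M β x‖ ^ 2 ∂μ)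
        Filter.atTop (nhds 0)) := by
  have := hβsfin
  have : NeZero β := ⟨hβne⟩
  have hMs : Tendsto Ms atTop (𝓝 M) := tendsto_pi_nhds.2 fun i => tendsto_pi_nhds.2 (hM i)
  have hlim x := tendsto_baryMap hY ε hβssupp hβsupp hweak hgs_cont hg_cont hg_unif hMs x
  have hbound h := norm_baryMap_le hY.isBounded (hβssupp h) ε (gs h) (Ms h)
  refine ⟨fun x _ => hlim x, hbound, fun μ _ _ => tendsto_integral_norm_sub_sq_of_tendsto
    (fun h => (measurable_baryMap ε (hgs_cont h) (Ms h) (βs h)).aestronglyMeasurable)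
    (measurable_baryMap ε hg_cont M β).aestronglyMeasurable hbound
    (norm_baryMap_le hY.isBounded hβsupp ε g M) hlim⟩

/-- **Stability of entropic barycentric maps.** If `β_h ⇀ β` weakly, `g_h → g` uniformly
on `Y`, `M_h → M` entrywise, then the barycentric maps converge pointwise on `X`, are
uniformly bounded by `max_{y∈Y} ‖y‖`, and hence converge in `L²(μ;ℝ^q)` for every finite
positive measure `μ` on `X`. -/
theorem stmt14 {p q : ℕ}
    (X : Set (EuclideanSpace ℝ (Fin p))) (Y : Set (EuclideanSpace ℝ (Fin q)))
    (hX : IsCompact X) (hY : IsCompact Y)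
    (ε : ℝ) (hε : 0 < ε)
    (βs : ℕ → Measure (EuclideanSpace ℝ (Fin q)))
    (β : Measure (EuclideanSpace ℝ (Fin q)))
    (hβsfin : ∀ h, IsFiniteMeasure (βs h)) [IsFiniteMeasure β]
    (hβsne : ∀ h, βs h ≠ 0) (hβne : β ≠ 0)
    (hβssupp : ∀ h, βs h Yᶜ = 0) (hβsupp : β Yᶜ = 0)
    (hweak : ∀ f : BoundedContinuousFunction (EuclideanSpace ℝ (Fin q)) ℝ,
      Filter.Tendsto (fun h => ∫ y, f y ∂(βs h)) Filter.atTop (nhds (∫ y, f y ∂β)))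
    (gs : ℕ → EuclideanSpace ℝ (Fin q) → ℝ) (g : EuclideanSpace ℝ (Fin q) → ℝ)
    (hgs_cont : ∀ h, Continuous (gs h)) (hg_cont : Continuous g)
    (hg_unif : TendstoUniformlyOn gs g Filter.atTop Y)
    (Ms : ℕ → Matrix (Fin q) (Fin p) ℝ) (M : Matrix (Fin q) (Fin p) ℝ)
    (hM : ∀ i j, Filter.Tendsto (fun h => Ms h i j) Filter.atTop (nhds (M i j))) :
    (∀ x ∈ X, Filter.Tendsto (fun h => baryMap ε (gs h) (Ms h) (βs h) x) Filter.atTop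
        (nhds (baryMap ε g M β x))) ∧
    (∀ (h : ℕ) (x : EuclideanSpace ℝ (Fin p)),
      ‖baryMap ε (gs h) (Ms h) (βs h) x‖ ≤ sSup ((fun y => ‖y‖) '' Y)) ∧
    (∀ μ : Measure (EuclideanSpace ℝ (Fin p)), IsFiniteMeasure μ → μ Xᶜ = 0 →
      Filter.Tendsto
        (fun h => ∫ x, ‖baryMap ε (gs h) (Ms h) (βs h) x - baryMap ε g M β x‖ ^ 2 ∂μ)
        Filter.atTop (nhds 0)) :=
  stmt14_general X Y hY ε βs β hβsfin hβne hβssupp hβsupp hweak gs g hgs_cont hg_cont hg_unif Ms M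
    hM
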